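/- arXiv:2211.12652 — 2 statements merged into one kernel-verified Lean document; each statement's English description precedes it below -/
import Mathlib

section
/- Vega of the barrier-pricing parameter 𝒜: fix K > 0, T > 0, S > 0, r_d, r_f ∈ ℝ and φ ∈ {1, −1}. Then the function σ ↦ 𝒜(σ) = φ(S e^{-r_f T} N(φx₁(σ)) − K e^{-r_d T} N(φ(x₁(σ) − σ√T))), where x₁(σ) = ln(S/K)/(σ√T) + (1+α(σ))σ√T and α(σ) = (r_d − r_f − σ²/2)/σ², is differentiable at every σ > 0 with derivative ∂𝒜/∂σ = (K√T/√(2π)) · (S/K)^{−r_d/σ² + r_f/σ² + 1/2} · exp(−(4 ln²(S/K) + T²(4r_d² + r_d(4σ² − 8r_f) + (2r_f + σ²)²))/(8σ²T)). -/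
/-!
Write `x₁ = x₁(σ)` and `x₂ = x₁ - σ√T`, and `n` for the standard normal density. The identity
`x₁ σ√T - σ²T/2 = ln(S/K) + (r_d - r_f)T` is exactly the statement
`S e^{-r_f T} n(x₁) = K e^{-r_d T} n(x₂)`. Differentiating `𝒜` by the chain rule, the two terms
carrying `x₁'` therefore cancel (using `φ² = 1`), and what remains is `K e^{-r_d T} n(x₂) √T`,
whose exponent expands to the stated closed form.
-/

noncomputable def stdNormalCdf (z : ℝ) : ℝ :=
  ∫ x in Set.Iic z, (1 / Real.sqrt (2 * Real.pi)) * Real.exp (-x ^ 2 / 2)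

open Real

theorem hasDerivAt_integral_Iic {f : ℝ → ℝ} (hf : MeasureTheory.Integrable f)
    (hc : Continuous f) (z : ℝ) :
    HasDerivAt (fun u => ∫ x in Set.Iic u, f x) (f z) z := by
  have hsplit : (fun u => ∫ x in Set.Iic u, f x) =
      fun u => (∫ x in Set.Iic 0, f x) + ∫ x in (0 : ℝ)..u, f x := by
    funext u
    rw [← intervalIntegral.integral_Iic_sub_Iic hf.integrableOn hf.integrableOn]
    ring
  rw [hsplit]
  exact (intervalIntegral.integral_hasDerivAt_right hf.intervalIntegrable
    hc.aestronglyMeasurable.stronglyMeasurableAtFilter hc.continuousAt).const_add _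

noncomputable def stdNormalPdf (z : ℝ) : ℝ :=
  1 / √(2 * π) * exp (-z ^ 2 / 2)

theorem integrable_stdNormalPdf : MeasureTheory.Integrable stdNormalPdf := by
  have h := (integrable_exp_neg_mul_sq (by norm_num : (0 : ℝ) < 1 / 2)).const_mul (1 / √(2 * π))
  convert h using 2 with x
  unfold stdNormalPdf
  ring_nf

theorem continuous_stdNormalPdf : Continuous stdNormalPdf := by
  unfold stdNormalPdf
  fun_prop

theorem hasDerivAt_stdNormalCdf (z : ℝ) : HasDerivAt stdNormalCdf (stdNormalPdf z) z :=
  hasDerivAt_integral_Iic integrable_stdNormalPdf continuous_stdNormalPdf z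

theorem stdNormalPdf_mul_of_sq_eq_one {φ : ℝ} (hφ : φ ^ 2 = 1) (z : ℝ) :
    stdNormalPdf (φ * z) = stdNormalPdf z := by
  rw [stdNormalPdf, stdNormalPdf, mul_pow, hφ, one_mul]

theorem hasDerivAt_signed_cdf_sub_cdf {x : ℝ → ℝ} {x' a b s φ σ : ℝ} (hφ : φ ^ 2 = 1)
    (hx : HasDerivAt x x' σ) (hbal : a * stdNormalPdf (x σ) = b * stdNormalPdf (x σ - σ * s)) :
    HasDerivAt (fun v => φ * (a * stdNormalCdf (φ * x v) - b * stdNormalCdf (φ * (x v - v * s))))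
      (b * stdNormalPdf (x σ - σ * s) * s) σ := by
  have h₁ := (hasDerivAt_stdNormalCdf (φ * x σ)).comp σ (hx.const_mul φ)
  have h₂ := (hasDerivAt_stdNormalCdf (φ * (x σ - σ * s))).comp σ
    ((hx.sub ((hasDerivAt_id σ).mul_const s)).const_mul φ)
  refine (((h₁.const_mul a).sub (h₂.const_mul b)).const_mul φ).congr_deriv ?_
  rw [stdNormalPdf_mul_of_sq_eq_one hφ, stdNormalPdf_mul_of_sq_eq_one hφ]
  linear_combination φ ^ 2 * x' * hbal + b * stdNormalPdf (x σ - σ * s) * s * hφ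

section Barrier

variable (S K T rd rf : ℝ)

/-- The paper's `x₁`, with `α = (r_d - r_f - σ²/2)/σ²` substituted. -/
noncomputable def barrierX₁ (σ : ℝ) : ℝ :=
  log (S / K) / (σ * √T) + (1 + (rd - rf - σ ^ 2 / 2) / σ ^ 2) * (σ * √T)

variable {S K T rd rf}

theorem differentiableAt_barrierX₁ (hT : 0 < T) {σ : ℝ} (hσ : σ ≠ 0) :
    DifferentiableAt ℝ (barrierX₁ S K T rd rf) σ := by
  have hsT : σ * √T ≠ 0 := mul_ne_zero hσ (sqrt_pos.2 hT).ne'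
  unfold barrierX₁
  fun_prop (disch := first | exact hsT | exact pow_ne_zero 2 hσ)

theorem barrierX₁_mul_sub (hT : 0 < T) {σ : ℝ} (hσ : σ ≠ 0) :
    barrierX₁ S K T rd rf σ * (σ * √T) - σ ^ 2 * T / 2 = log (S / K) + (rd - rf) * T := by
  obtain ⟨s, hs, rfl⟩ : ∃ s, 0 < s ∧ T = s ^ 2 := ⟨√T, sqrt_pos.2 hT, (sq_sqrt hT.le).symm⟩
  rw [barrierX₁, sqrt_sq hs.le]
  field_simp
  ring

theorem mul_stdNormalPdf_barrierX₁_eq (hK : 0 < K) (hT : 0 < T) (hS : 0 < S) {σ : ℝ}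
    (hσ : σ ≠ 0) :
    S * exp (-rf * T) * stdNormalPdf (barrierX₁ S K T rd rf σ) =
      K * exp (-rd * T) * stdNormalPdf (barrierX₁ S K T rd rf σ - σ * √T) := by
  have key := barrierX₁_mul_sub (rd := rd) (rf := rf) (S := S) (K := K) hT hσ
  have hs2 : √T ^ 2 = T := sq_sqrt hT.le
  rw [log_div hS.ne' hK.ne'] at key
  generalize barrierX₁ S K T rd rf σ = x at key ⊢
  simp only [stdNormalPdf]
  rw [← exp_log hS, ← exp_log hK]
  simp only [mul_left_comm _ (1 / √(2 * π)), ← exp_add]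
  congr 2
  linear_combination -key + σ ^ 2 / 2 * hs2

theorem mul_stdNormalPdf_barrierX₁_sub_eq (hK : 0 < K) (hT : 0 < T) (hS : 0 < S) {σ : ℝ}
    (hσ : σ ≠ 0) :
    K * exp (-rd * T) * stdNormalPdf (barrierX₁ S K T rd rf σ - σ * √T) =
      K / √(2 * π) * (S / K) ^ (-rd / σ ^ 2 + rf / σ ^ 2 + 1 / 2) *
        exp (-(4 * log (S / K) ^ 2 +
            T ^ 2 * (4 * rd ^ 2 + rd * (4 * σ ^ 2 - 8 * rf) + (2 * rf + σ ^ 2) ^ 2)) /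
          (8 * σ ^ 2 * T)) := by
  have hexp : -rd * T - (barrierX₁ S K T rd rf σ - σ * √T) ^ 2 / 2 =
      log (S / K) * (-rd / σ ^ 2 + rf / σ ^ 2 + 1 / 2) +
        -(4 * log (S / K) ^ 2 +
          T ^ 2 * (4 * rd ^ 2 + rd * (4 * σ ^ 2 - 8 * rf) + (2 * rf + σ ^ 2) ^ 2)) /
          (8 * σ ^ 2 * T) := by
    obtain ⟨s, hs, rfl⟩ : ∃ s, 0 < s ∧ T = s ^ 2 := ⟨√T, sqrt_pos.2 hT, (sq_sqrt hT.le).symm⟩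
    rw [barrierX₁, sqrt_sq hs.le]
    field_simp
    ring
  calc K * exp (-rd * T) * stdNormalPdf (barrierX₁ S K T rd rf σ - σ * √T)
      = K / √(2 * π) * exp (-rd * T - (barrierX₁ S K T rd rf σ - σ * √T) ^ 2 / 2) := by
        rw [stdNormalPdf, sub_eq_add_neg (-rd * T), ← neg_div, exp_add]
        ring
    _ = _ := by
        rw [hexp, exp_add, rpow_def_of_pos (div_pos hS hK)]
        ring

end Barrier

/-- Vega of the barrier-pricing parameter `𝒜`. -/
theorem vega_A (K T S rd rf φ : ℝ) (hK : 0 < K) (hT : 0 < T) (hS : 0 < S)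
    (hφ : φ = 1 ∨ φ = -1) (σ : ℝ) (hσ : 0 < σ) :
    HasDerivAt (fun v : ℝ =>
        φ * (S * Real.exp (-rf * T) *
            stdNormalCdf (φ * (Real.log (S / K) / (v * Real.sqrt T) +
              (1 + (rd - rf - v ^ 2 / 2) / v ^ 2) * (v * Real.sqrt T))) -
          K * Real.exp (-rd * T) *
            stdNormalCdf (φ * (Real.log (S / K) / (v * Real.sqrt T) +
              (1 + (rd - rf - v ^ 2 / 2) / v ^ 2) * (v * Real.sqrt T) - v * Real.sqrt T))))
      (K * Real.sqrt T / Real.sqrt (2 * Real.pi) *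
        (S / K) ^ (-rd / σ ^ 2 + rf / σ ^ 2 + 1 / 2) *
        Real.exp (-(4 * Real.log (S / K) ^ 2 +
            T ^ 2 * (4 * rd ^ 2 + rd * (4 * σ ^ 2 - 8 * rf) + (2 * rf + σ ^ 2) ^ 2)) /
          (8 * σ ^ 2 * T))) σ := by
  have hφ2 : φ ^ 2 = 1 := by rcases hφ with rfl | rfl <;> norm_num
  have hderiv := hasDerivAt_signed_cdf_sub_cdf (x := barrierX₁ S K T rd rf) (s := √T) hφ2
    (differentiableAt_barrierX₁ hT hσ.ne').hasDerivAt
    (mul_stdNormalPdf_barrierX₁_eq hK hT hS hσ.ne')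
  rw [mul_stdNormalPdf_barrierX₁_sub_eq hK hT hS hσ.ne'] at hderiv
  exact hderiv.congr_deriv (by ring)
end

section
/- Vega of the barrier-pricing parameter ℬ: fix K > 0, B > 0, T > 0, S > 0, r_d, r_f ∈ ℝ and φ ∈ {1, −1}. Then the function σ ↦ ℬ(σ) = φ(S e^{-r_f T} N(φx₂(σ)) − K e^{-r_d T} N(φ(x₂(σ) − σ√T))), where x₂(σ) = ln(S/B)/(σ√T) + (1+α(σ))σ√T and α(σ) = (r_d − r_f − σ²/2)/σ², is differentiable at every σ > 0 with derivative ∂ℬ/∂σ = (1/(2√(2π) σ² √T)) · [ K(2ln(S/B) + T(2r_d − 2r_f + σ²)) exp(−(T(−2r_d + 2r_f + σ²) − 2ln(S/B))²/(8σ²T) − r_d T) + S(T(−2r_d + 2r_f + σ²) − 2ln(S/B)) exp(−(2ln(S/B) + T(2r_d − 2r_f + σ²))²/(8σ²T) − r_f T) ]. -/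
open MeasureTheory Real

theorem hasDerivAt_integral_Iic_s19 {E : Type*} [NormedAddCommGroup E] [NormedSpace ℝ E]
    [CompleteSpace E] {f : ℝ → E} (hf : Integrable f) (hf_cont : Continuous f) (z : ℝ) :
    HasDerivAt (fun w => ∫ x in Set.Iic w, f x) (f z) z := by
  have h_split : (fun w => ∫ x in Set.Iic w, f x) =
      fun w => (∫ x in Set.Iic 0, f x) + ∫ x in (0 : ℝ)..w, f x := by
    funext w
    rw [← intervalIntegral.integral_Iic_sub_Iic hf.integrableOn hf.integrableOn, add_sub_cancel]
  rw [h_split]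
  exact (intervalIntegral.integral_hasDerivAt_right hf.intervalIntegrable
    (hf_cont.stronglyMeasurableAtFilter _ _) hf_cont.continuousAt).const_add _

theorem integrable_stdNormalDensity :
    Integrable fun x : ℝ => 1 / √(2 * π) * exp (-x ^ 2 / 2) := by
  have h := (integrable_exp_neg_mul_sq (b := 1 / 2) (by norm_num)).const_mul (1 / √(2 * π))
  convert h using 4 with x
  ring

theorem hasDerivAt_stdNormalCdf_s19 (z : ℝ) :
    HasDerivAt stdNormalCdf (1 / √(2 * π) * exp (-z ^ 2 / 2)) z :=
  hasDerivAt_integral_Iic_s19 integrable_stdNormalDensity (by fun_prop) z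

theorem HasDerivAt.mul_stdNormalCdf_mul {φ f' x : ℝ} {f : ℝ → ℝ} (hφ : φ ^ 2 = 1)
    (hf : HasDerivAt f f' x) :
    HasDerivAt (fun v => φ * stdNormalCdf (φ * f v))
      (f' * (1 / √(2 * π) * Real.exp (-f x ^ 2 / 2))) x := by
  refine (((hasDerivAt_stdNormalCdf_s19 _).comp x (hf.const_mul φ)).const_mul φ).congr_deriv ?_
  rw [mul_pow, hφ, one_mul]
  linear_combination (f' * (1 / √(2 * π) * Real.exp (-f x ^ 2 / 2))) * hφ

theorem hasDerivAt_div_mul_add_mul (a s c : ℝ) {v : ℝ} (hv : v ≠ 0) (hs : s ≠ 0) :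
    HasDerivAt (fun w => a / (w * s) + c * w) (-(a / (v * s) - c * v) / v) v := by
  have h := ((hasDerivAt_const v a).div ((hasDerivAt_id v).mul_const s) (mul_ne_zero hv hs)).add
    ((hasDerivAt_id v).const_mul c)
  refine h.congr_deriv ?_
  simp only [id]
  field_simp
  ring

theorem div_mul_add_one_add_div_sq_mul_eq (L r s v : ℝ) (hs : s ≠ 0) :
    L / (v * s) + (1 + (r - v ^ 2 / 2) / v ^ 2) * (v * s) =
      (L + r * s ^ 2) / (v * s) + s / 2 * v := by
  rcases eq_or_ne v 0 with rfl | hv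
  · simp
  field_simp
  ring

theorem vega_B_general (K B T S rd rf φ : ℝ) (hT : 0 < T)
    (hφ : φ = 1 ∨ φ = -1) (σ : ℝ) (hσ : 0 < σ) :
    HasDerivAt (fun v : ℝ =>
        φ * (S * Real.exp (-rf * T) *
            stdNormalCdf (φ * (Real.log (S / B) / (v * Real.sqrt T) +
              (1 + (rd - rf - v ^ 2 / 2) / v ^ 2) * (v * Real.sqrt T))) -
          K * Real.exp (-rd * T) *
            stdNormalCdf (φ * (Real.log (S / B) / (v * Real.sqrt T) +
              (1 + (rd - rf - v ^ 2 / 2) / v ^ 2) * (v * Real.sqrt T) - v * Real.sqrt T))))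
      (1 / (2 * Real.sqrt (2 * Real.pi) * σ ^ 2 * Real.sqrt T) *
        (K * (2 * Real.log (S / B) + T * (2 * rd - 2 * rf + σ ^ 2)) *
            Real.exp (-(T * (-2 * rd + 2 * rf + σ ^ 2) - 2 * Real.log (S / B)) ^ 2 /
                (8 * σ ^ 2 * T) - rd * T) +
          S * (T * (-2 * rd + 2 * rf + σ ^ 2) - 2 * Real.log (S / B)) *
            Real.exp (-(2 * Real.log (S / B) + T * (2 * rd - 2 * rf + σ ^ 2)) ^ 2 /
                (8 * σ ^ 2 * T) - rf * T))) σ := by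
  have hφ2 : φ ^ 2 = 1 := by rcases hφ with rfl | rfl <;> norm_num
  obtain ⟨s, hs, rfl⟩ : ∃ s, 0 < s ∧ T = s ^ 2 := ⟨√T, sqrt_pos.2 hT, (sq_sqrt hT.le).symm⟩
  rw [sqrt_sq hs.le]
  set L := log (S / B)
  simp_rw [div_mul_add_one_add_div_sq_mul_eq L (rd - rf) s _ hs.ne']
  set a := L + (rd - rf) * s ^ 2
  have hx₂_sub (v : ℝ) : a / (v * s) + s / 2 * v - v * s = a / (v * s) + -(s / 2) * v := by ring
  simp_rw [hx₂_sub]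
  have hN₁ := ((hasDerivAt_div_mul_add_mul a s (s / 2) hσ.ne' hs.ne').mul_stdNormalCdf_mul
    hφ2).const_mul (S * exp (-rf * s ^ 2))
  have hN₂ := ((hasDerivAt_div_mul_add_mul a s (-(s / 2)) hσ.ne' hs.ne').mul_stdNormalCdf_mul
    hφ2).const_mul (K * exp (-rd * s ^ 2))
  refine ((hN₁.sub hN₂).congr_of_eventuallyEq
    (.of_forall fun v => by simp only [Pi.sub_apply]; ring)).congr_deriv ?_
  have e₁ : -(2 * L + s ^ 2 * (2 * rd - 2 * rf + σ ^ 2)) ^ 2 / (8 * σ ^ 2 * s ^ 2) - rf * s ^ 2 =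
      -(a / (σ * s) + s / 2 * σ) ^ 2 / 2 + -rf * s ^ 2 := by
    field_simp
    ring
  have e₂ : -(s ^ 2 * (-2 * rd + 2 * rf + σ ^ 2) - 2 * L) ^ 2 / (8 * σ ^ 2 * s ^ 2) - rd * s ^ 2 =
      -(a / (σ * s) + -(s / 2) * σ) ^ 2 / 2 + -rd * s ^ 2 := by
    field_simp
    ring
  rw [e₁, e₂, exp_add, exp_add]
  field_simp
  ring

/-- Vega of the barrier-pricing parameter `ℬ`. -/
theorem vega_B (K B T S rd rf φ : ℝ) (hK : 0 < K) (hB : 0 < B) (hT : 0 < T)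
    (hS : 0 < S) (hφ : φ = 1 ∨ φ = -1) (σ : ℝ) (hσ : 0 < σ) :
    HasDerivAt (fun v : ℝ =>
        φ * (S * Real.exp (-rf * T) *
            stdNormalCdf (φ * (Real.log (S / B) / (v * Real.sqrt T) +
              (1 + (rd - rf - v ^ 2 / 2) / v ^ 2) * (v * Real.sqrt T))) -
          K * Real.exp (-rd * T) *
            stdNormalCdf (φ * (Real.log (S / B) / (v * Real.sqrt T) +
              (1 + (rd - rf - v ^ 2 / 2) / v ^ 2) * (v * Real.sqrt T) - v * Real.sqrt T))))
      (1 / (2 * Real.sqrt (2 * Real.pi) * σ ^ 2 * Real.sqrt T) *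
        (K * (2 * Real.log (S / B) + T * (2 * rd - 2 * rf + σ ^ 2)) *
            Real.exp (-(T * (-2 * rd + 2 * rf + σ ^ 2) - 2 * Real.log (S / B)) ^ 2 /
                (8 * σ ^ 2 * T) - rd * T) +
          S * (T * (-2 * rd + 2 * rf + σ ^ 2) - 2 * Real.log (S / B)) *
            Real.exp (-(2 * Real.log (S / B) + T * (2 * rd - 2 * rf + σ ^ 2)) ^ 2 /
                (8 * σ ^ 2 * T) - rf * T))) σ :=
  vega_B_general K B T S rd rf φ hT hφ σ hσ
end
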